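/- arXiv:2008.02700 — 5 statements merged into one kernel-verified Lean document; each statement's English description precedes it below -/
import Mathlib

section
/- Let L = L_{-2} ⊕ L_{-1} ⊕ L_0 ⊕ L_1 ⊕ L_2 be a 5-graded Lie algebra over a field of characteristic not 2 or 3 with L_0 = [L_1, L_{-1}]. Suppose I is a subspace of L such that for every l ∈ L_i with i ≠ 0, the map exp(ad l) is a well-defined Lie algebra endomorphism and exp(ad l)(I) ⊆ I. Then I is an ideal of L. -/
/-!
Since `I` is stable under `exp(ad (t • l))` for every scalar `t`, it contains every value of a
polynomial of degree at most four in `t` whose linear coefficient is `⁅l, x⁆`; a five-point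
difference quotient, which needs `12` to be invertible, recovers that coefficient. So `ad l`
preserves `I` for homogeneous `l` of nonzero degree. The elements whose adjoint action preserves
`I` form a Lie subalgebra, which therefore contains `L₀ = [L₁, L₋₁]`, hence all of `L`.
-/

/-- The truncated exponential of `ad l`, a finite sum since `ad l` is nilpotent
of index at most 5 for homogeneous elements of nonzero degree in a 5-graded
Lie algebra. -/
noncomputable def expAd (k : Type*) (L : Type*) [Field k] [LieRing L] [LieAlgebra k L]
    (l : L) : Module.End k L :=
  ∑ n ∈ Finset.range 5, (n.factorial : k)⁻¹ • (LieAlgebra.ad k L l) ^ n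

open Finset

/-- Five-point central difference: `12 • b 1 = 8 • (f 1 - f (-1)) - (f 2 - f (-2))`
for `f t = ∑ tⁿ • bₙ`. -/
theorem linear_coeff_mem_of_forall_quartic_mem {k M : Type*} [Field k] [AddCommGroup M]
    [Module k M] (h2 : (2 : k) ≠ 0) (h3 : (3 : k) ≠ 0) (p : Submodule k M) (b : ℕ → M)
    (hp : ∀ t : k, ∑ n ∈ range 5, t ^ n • b n ∈ p) : b 1 ∈ p := by
  have h12 : (12 : k) ≠ 0 := by
    have : (2 * 2 * 3 : k) ≠ 0 := mul_ne_zero (mul_ne_zero h2 h2) h3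
    norm_num at this ⊢
    exact this
  have hdiff : (12 : k) • b 1 =
      (8 : k) • (∑ n ∈ range 5, (1 : k) ^ n • b n - ∑ n ∈ range 5, (-1 : k) ^ n • b n)
        - (∑ n ∈ range 5, (2 : k) ^ n • b n - ∑ n ∈ range 5, (-2 : k) ^ n • b n) := by
    simp only [sum_range_succ, sum_range_zero]
    module
  have hmem : (12 : k) • b 1 ∈ p := by
    rw [hdiff]
    exact sub_mem (p.smul_mem _ (sub_mem (hp 1) (hp (-1)))) (sub_mem (hp 2) (hp (-2)))
  simpa [h12] using p.smul_mem (12 : k)⁻¹ hmem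

section LieAlgebra

variable {k L : Type*} [Field k] [LieRing L] [LieAlgebra k L]

theorem expAd_smul_apply (t : k) (l x : L) :
    expAd k L (t • l) x =
      ∑ n ∈ range 5, t ^ n • ((n.factorial : k)⁻¹ • (LieAlgebra.ad k L l ^ n) x) := by
  simp only [expAd, map_smul, smul_pow, LinearMap.sum_apply, LinearMap.smul_apply]
  exact sum_congr rfl fun n _ => smul_comm _ _ _

theorem lie_mem_of_forall_expAd_smul_mem (h2 : (2 : k) ≠ 0) (h3 : (3 : k) ≠ 0)
    (I : Submodule k L) {l x : L} (hI : ∀ t : k, expAd k L (t • l) x ∈ I) : ⁅l, x⁆ ∈ I := by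
  simpa using linear_coeff_mem_of_forall_quartic_mem h2 h3 I
    (fun n => (n.factorial : k)⁻¹ • (LieAlgebra.ad k L l ^ n) x)
    fun t => expAd_smul_apply t l x ▸ hI t

def Submodule.lieStabilizer (I : Submodule k L) : LieSubalgebra k L where
  carrier := {y | ∀ x ∈ I, ⁅y, x⁆ ∈ I}
  add_mem' hy hz x hx := by
    rw [add_lie]
    exact add_mem (hy x hx) (hz x hx)
  zero_mem' x _ := by simp
  smul_mem' c y hy x hx := by
    rw [smul_lie]
    exact I.smul_mem c (hy x hx)
  lie_mem' {y z} hy hz x hx := by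
    rw [lie_lie]
    exact sub_mem (hy _ (hz x hx)) (hz _ (hy x hx))

theorem Submodule.mem_lieStabilizer {I : Submodule k L} {y : L} :
    y ∈ I.lieStabilizer ↔ ∀ x ∈ I, ⁅y, x⁆ ∈ I :=
  Iff.rfl

end LieAlgebra

theorem statement0_general (k : Type*) [Field k] (L : Type*) [LieRing L] [LieAlgebra k L]
    (h2 : (2 : k) ≠ 0) (h3 : (3 : k) ≠ 0)
    (G : ℤ → Submodule k L)
    (hdecomp : DirectSum.IsInternal G)
    (hgen0 : G 0 ≤ Submodule.span k
      {z : L | ∃ x ∈ G 1, ∃ y ∈ G (-1 : ℤ), z = ⁅x, y⁆})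
    (I : Submodule k L)
    (hexp_inv : ∀ i : ℤ, i ≠ 0 → ∀ l ∈ G i, ∀ x ∈ I, expAd k L l x ∈ I) :
    ∀ y : L, ∀ x ∈ I, ⁅y, x⁆ ∈ I := by
  set S := I.lieStabilizer
  have hdeg_ne : ∀ i : ℤ, i ≠ 0 → G i ≤ S.toSubmodule := fun i hi l hl x hx =>
    lie_mem_of_forall_expAd_smul_mem h2 h3 I fun t => hexp_inv i hi _ ((G i).smul_mem t hl) x hx
  have hdeg_zero : G 0 ≤ S.toSubmodule := by
    refine hgen0.trans (Submodule.span_le.mpr ?_)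
    rintro _ ⟨a, ha, b, hb, rfl⟩
    exact S.lie_mem (hdeg_ne 1 one_ne_zero ha) (hdeg_ne (-1) (by norm_num) hb)
  have hall : ⊤ ≤ S.toSubmodule := by
    rw [← hdecomp.submodule_iSup_eq_top]
    refine iSup_le fun i => ?_
    rcases eq_or_ne i 0 with rfl | hi
    exacts [hdeg_zero, hdeg_ne i hi]
  exact fun y => Submodule.mem_lieStabilizer.mp (hall Submodule.mem_top)

/-- Let `L = L₋₂ ⊕ L₋₁ ⊕ L₀ ⊕ L₁ ⊕ L₂` be a 5-graded Lie algebra over a field of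
characteristic not 2 or 3 with `L₀ = [L₁, L₋₁]`.  Suppose `I` is a subspace of `L`
such that for every `l ∈ Lᵢ` with `i ≠ 0`, `exp(ad l)` is a well-defined Lie algebra
endomorphism and `exp(ad l)(I) ⊆ I`.  Then `I` is an ideal of `L`. -/
theorem statement0 (k : Type*) [Field k] (L : Type*) [LieRing L] [LieAlgebra k L]
    (h2 : (2 : k) ≠ 0) (h3 : (3 : k) ≠ 0)
    (G : ℤ → Submodule k L)
    (hdecomp : DirectSum.IsInternal G)
    (hbounded : ∀ i : ℤ, 2 < |i| → G i = ⊥)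
    (hbracket : ∀ i j : ℤ, ∀ x ∈ G i, ∀ y ∈ G j, ⁅x, y⁆ ∈ G (i + j))
    (hgen0 : G 0 ≤ Submodule.span k
      {z : L | ∃ x ∈ G 1, ∃ y ∈ G (-1 : ℤ), z = ⁅x, y⁆})
    (I : Submodule k L)
    (hexp_hom : ∀ i : ℤ, i ≠ 0 → ∀ l ∈ G i, ∀ x y : L,
      expAd k L l ⁅x, y⁆ = ⁅expAd k L l x, expAd k L l y⁆)
    (hexp_inv : ∀ i : ℤ, i ≠ 0 → ∀ l ∈ G i, ∀ x ∈ I, expAd k L l x ∈ I) :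
    ∀ y : L, ∀ x ∈ I, ⁅y, x⁆ ∈ I :=
  statement0_general k L h2 h3 G hdecomp hgen0 I hexp_inv
end

section
/- Let J be a Jordan division algebra over a field of characteristic not 2, 3, let L = K(J) be its Tits–Kantor–Koecher Lie algebra L = J_- ⊕ Inst(J) ⊕ J_+, and let I be an inner ideal of L. If I ∩ J_+ ≠ 0, then J_+ ⊆ I. -/
variable (k : Type*) [Field k] (J : Type*) [NonAssocRing J] [Module k J]
  [SMulCommClass k J J] [IsScalarTower k J J]

/-- The Jordan triple `V`-operator `V_{x,y} : z ↦ (x∘y)∘z + (z∘y)∘x − (z∘x)∘y`. -/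
noncomputable def VJ (x y : J) : Module.End k J :=
  LinearMap.mulLeft k (x * y)
    + (LinearMap.mulRight k x).comp (LinearMap.mulRight k y)
    - (LinearMap.mulRight k y).comp (LinearMap.mulRight k x)

/-- The quadratic operator `U_x = 2L_x² − L_{x²}`. -/
noncomputable def UJ (x : J) : Module.End k J :=
  (2 : ℤ) • ((LinearMap.mulLeft k x).comp (LinearMap.mulLeft k x))
    - LinearMap.mulLeft k (x * x)

/-- Let `J` be a Jordan division algebra (char ≠ 2,3), `L = K(J)` its
Tits–Kantor–Koecher Lie algebra `L = J₋ ⊕ Inst(J) ⊕ J₊`, and `I` an inner ideal of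
`L`.  If `I ∩ J₊ ≠ 0`, then `J₊ ⊆ I`.  The copies `J₊, J₋` are realized by injective
linear maps `jp, jm : J → L`, and the TKK bracket rule
`[a₊,[b₊,c₋]] = [a₊, V_{b,c}] = −(V_{b,c} a)₊` is recorded as a hypothesis. -/
theorem statement10 (L : Type*) [LieRing L] [LieAlgebra k L]
    (h2 : (2 : k) ≠ 0) (h3 : (3 : k) ≠ 0)
    (hcomm : ∀ a b : J, a * b = b * a)
    (hjordan : ∀ a b : J, (a * b) * (a * a) = a * (b * (a * a)))
    (hdiv : ∀ a : J, a ≠ 0 → Function.Bijective (UJ k J a))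
    (jp jm : J →ₗ[k] L)
    (hjp : Function.Injective jp) (hjm : Function.Injective jm)
    (hplus : ∀ a b : J, ⁅jp a, jp b⁆ = 0)
    (hminus : ∀ a b : J, ⁅jm a, jm b⁆ = 0)
    (hbr : ∀ a b c : J, ⁅jp a, ⁅jp b, jm c⁆⁆ = - jp (VJ k J b c a))
    (I : Submodule k L)
    (hinner : ∀ u ∈ I, ∀ v ∈ I, ∀ z : L, ⁅u, ⁅v, z⁆⁆ ∈ I)
    (a : J) (ha : a ≠ 0) (haI : jp a ∈ I) :
    ∀ b : J, jp b ∈ I := by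
  intro b
  obtain ⟨c, hc⟩ := (hdiv a ha).2 (-b)
  have key : ⁅jp a, ⁅jp a, jm c⁆⁆ ∈ I := hinner _ haI _ haI _
  rw [hbr] at key
  have hV : VJ k J a c a = UJ k J a c := by
    simp only [VJ, UJ, LinearMap.sub_apply, LinearMap.add_apply,
      LinearMap.mulLeft_apply, LinearMap.mulRight_apply, LinearMap.comp_apply,
      LinearMap.smul_apply, two_zsmul, two_smul]
    rw [hcomm (a * c) a]
  rw [hV, hc] at key
  simpa using key
end

section
/- Let F be an alternative division algebra, A = F ⊕ F with exchange involution, and f ∈ F nonzero. Then U_{(f,0)}(A) = (F, 0) and U_{(0,f)}(A) = (0, F), where U_x(y) = V_{x,y}(x) = 2(x ȳ)x − (x x̄)y. -/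
/-- The multiplication of `A = F ⊕ F`: `(a,b)·(c,d) = (ac, db)`. -/
def Amul {F : Type*} [Mul F] (p q : F × F) : F × F := (p.1 * q.1, q.2 * p.2)

/-- The exchange involution on `A = F ⊕ F`. -/
def Abar {F : Type*} (p : F × F) : F × F := (p.2, p.1)

/-- The operator `V_{x,y}(z) = (x ȳ)z + (z ȳ)x − (z x̄)y` on `A = F ⊕ F`. -/
def VA {F : Type*} [NonAssocRing F] (x y z : F × F) : F × F :=
  Amul (Amul x (Abar y)) z + Amul (Amul z (Abar y)) x - Amul (Amul z (Abar x)) y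

/-- The `U`-operator `U_x(y) = V_{x,y}(x)` of `A = F ⊕ F`. -/
def UA {F : Type*} [NonAssocRing F] (x y : F × F) : F × F := VA x y x

/-- Let `F` be an alternative division algebra, `A = F ⊕ F` with exchange involution,
and `f ∈ F` nonzero.  Then `U_{(f,0)}(A) = (F,0)` and `U_{(0,f)}(A) = (0,F)`. -/
theorem statement13 (k : Type*) [Field k] (F : Type*) [NonAssocRing F] [Module k F]
    [SMulCommClass k F F] [IsScalarTower k F F]
    (h2 : (2 : k) ≠ 0) (h3 : (3 : k) ≠ 0)
    (halt₁ : ∀ x y : F, x * (x * y) = (x * x) * y)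
    (halt₂ : ∀ x y : F, (y * x) * x = y * (x * x))
    (hdiv : ∀ x : F, x ≠ 0 → ∃ y : F, x * y = 1 ∧ y * x = 1
      ∧ ∀ z : F, y * (x * z) = z ∧ (z * x) * y = z)
    (f : F) (hf : f ≠ 0) :
    Set.range (UA ((f, 0) : F × F)) = {p : F × F | p.2 = 0}
      ∧ Set.range (UA ((0, f) : F × F)) = {p : F × F | p.1 = 0} := by

  obtain ⟨y, hfy, hyf, hprop⟩ := hdiv f hf
  have hy : y ≠ 0 := by
    intro h
    apply hf
    have hz := (hprop f).2
    rw [h, mul_zero] at hz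
    exact hz.symm
  obtain ⟨y', -, -, hprop'⟩ := hdiv y hy
  have hy'f : y' = f := by
    have hz := (hprop' f).1
    rwa [hyf, mul_one] at hz
  rw [hy'f] at hprop'
  have hL : ∀ z : F, f * (y * z) = z := fun z => (hprop' z).1
  have hR : ∀ z : F, (z * y) * f = z := fun z => (hprop' z).2
  have hc : ∀ g : F, ((2:k)⁻¹ • g) + ((2:k)⁻¹ • g) = g := by
    intro g
    rw [← two_smul k, ← mul_smul, mul_inv_cancel₀ h2, one_smul]
  constructor
  · ext p
    simp only [Set.mem_range, Set.mem_setOf_eq]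
    constructor
    · rintro ⟨⟨a, b⟩, rfl⟩
      simp [UA, VA, Amul, Abar]
    · intro hp
      refine ⟨(0, y * (((2:k)⁻¹ • p.1) * y)), ?_⟩
      obtain ⟨p1, p2⟩ := p
      simp only at hp
      subst hp
      simp [UA, VA, Amul, Abar, hL, hR]
      exact hc p1
  · ext p
    simp only [Set.mem_range, Set.mem_setOf_eq]
    constructor
    · rintro ⟨⟨a, b⟩, rfl⟩
      simp [UA, VA, Amul, Abar]
    · intro hp
      refine ⟨((y * ((2:k)⁻¹ • p.2)) * y, 0), ?_⟩
      obtain ⟨p1, p2⟩ := p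
      simp only at hp
      subst hp
      simp [UA, VA, Amul, Abar, hL, hR]
      exact hc p2
end

section
/- Let J be a cubic Jordan division algebra (char ≠ 2,3) with norm N, trace form T, adjoint ♯, and let A = M(J,1) be the associated 2×2 matrix structurable algebra with involution swapping the diagonal entries, and s = diag(1, −1) its skew element. Then every derivation D of A satisfies D(s) = 0, and there exist linear maps m, n on J such that D sends the matrix with entries (α, l; j, β) to the matrix (0, m(l); n(j), 0). Moreover if D ≠ 0 then both m ≠ 0 and n ≠ 0. -/
variable {k : Type*} [Field k] {J : Type*} [AddCommGroup J] [Module k J]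

/-- The multiplication of the matrix structurable algebra `M(J,1)`, on elements
`(k₁, j₁; j₂, k₂)` represented as `(k₁, j₁, j₂, k₂) : k × J × J × k`, with trace
form `T` and Freudenthal cross product `cr`. -/
def Mmul (T : J → J → k) (cr : J → J → J) (p q : k × J × J × k) : k × J × J × k :=
  (p.1 * q.1 + T p.2.1 q.2.2.1,
   p.1 • q.2.1 + q.2.2.2 • p.2.1 + cr p.2.2.1 q.2.2.1,
   q.1 • p.2.2.1 + p.2.2.2 • q.2.2.1 + cr p.2.1 q.2.1,
   p.2.2.2 * q.2.2.2 + T p.2.2.1 q.2.1)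

/-- The involution of `M(J,1)`, swapping the two diagonal scalar entries. -/
def Mbar (p : k × J × J × k) : k × J × J × k := (p.2.2.2, p.2.1, p.2.2.1, p.1)

/-- The skew element `s = diag(1,−1)` of `M(J,1)`. -/
def Ms : k × J × J × k := ((1 : k), (0 : J), (0 : J), (-1 : k))

/-!
A derivation `D` commuting with the involution kills the unit `1 = (1, 0; 0, 1)` and maps the
skew element `s` to a skew element `λ s`; differentiating `s² = 1` gives `2λ = 0`, so `D s = 0`.
Hence `D` kills the diagonal idempotents `(1 ± s) / 2` and therefore preserves their Peirce
spaces, the two off-diagonal entries: this yields `m` and `n`. Differentiating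
`(0, x; 0, 0)(0, y; 0, 0) = (0, 0; x × y, 0)` gives `n (x × y) = m x × y + x × m y`, and
symmetrically. In a division algebra `j = N(j)⁻¹ j♯♯ = (2 N(j))⁻¹ j♯ × j♯` for `j ≠ 0`, so the
elements `x × x` span `J`, and `m = 0` forces `n = 0` (and conversely), hence `D = 0`.
-/

theorem eq_zero_of_add_self_eq_zero {M : Type*} [AddCommGroup M] [Module k M] (h2 : (2 : k) ≠ 0)
    {x : M} (h : x + x = 0) : x = 0 := by
  rw [← two_smul k x] at h
  exact (smul_eq_zero.1 h).resolve_left h2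

theorem span_range_cross_self_eq_top (h2 : (2 : k) ≠ 0) {cross : J → J → J} {sharp : J → J}
    (hcross_self : ∀ j, cross j j = (2 : k) • sharp j) {N : J → k} (hN : ∀ j, N j = 0 → j = 0)
    (hsharp : ∀ j, sharp (sharp j) = N j • j) :
    Submodule.span k (Set.range fun x => cross x x) = ⊤ := by
  refine Submodule.eq_top_iff'.2 fun j => ?_
  by_cases hNj : N j = 0
  · simp [hN j hNj]
  · have hj : j = ((N j)⁻¹ * 2⁻¹) • cross (sharp j) (sharp j) := by
      rw [hcross_self, hsharp, smul_smul, smul_smul,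
        show (N j)⁻¹ * 2⁻¹ * 2 * N j = 1 by field_simp, one_smul]
    rw [hj]
    exact Submodule.smul_mem _ _ (Submodule.subset_span ⟨_, rfl⟩)

section

variable (T : J →ₗ[k] J →ₗ[k] k) (cross : J →ₗ[k] J →ₗ[k] J)

theorem Mmul_zero_left (q : k × J × J × k) : Mmul (T · ·) (cross · ·) 0 q = 0 := by
  simp [Mmul, Prod.ext_iff]

theorem Mmul_zero_right (p : k × J × J × k) : Mmul (T · ·) (cross · ·) p 0 = 0 := by
  simp [Mmul, Prod.ext_iff]

theorem Mmul_one_left (p : k × J × J × k) : Mmul (T · ·) (cross · ·) (1, 0, 0, 1) p = p := by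
  simp [Mmul]

theorem Mmul_one_right (p : k × J × J × k) :
    Mmul (T · ·) (cross · ·) p (1, 0, 0, 1) = p := by
  simp [Mmul]

theorem Ms_mul_Ms : Mmul (T · ·) (cross · ·) Ms Ms = (1, 0, 0, 1) := by
  simp [Mmul, Ms]

structure IsMDerivation (D : Module.End k (k × J × J × k)) : Prop where
  leibniz : ∀ p q, D (Mmul (T · ·) (cross · ·) p q)
    = Mmul (T · ·) (cross · ·) (D p) q + Mmul (T · ·) (cross · ·) p (D q)
  map_Mbar : ∀ p, D (Mbar p) = Mbar (D p)

def upperRight (D : Module.End k (k × J × J × k)) : J →ₗ[k] J :=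
  (LinearMap.fst k J (J × k) ∘ₗ LinearMap.snd k k (J × J × k)) ∘ₗ D ∘ₗ
    (LinearMap.inr k k (J × J × k) ∘ₗ LinearMap.inl k J (J × k))

def lowerLeft (D : Module.End k (k × J × J × k)) : J →ₗ[k] J :=
  (LinearMap.fst k J k ∘ₗ LinearMap.snd k J (J × k) ∘ₗ LinearMap.snd k k (J × J × k)) ∘ₗ
    D ∘ₗ (LinearMap.inr k k (J × J × k) ∘ₗ LinearMap.inr k J (J × k) ∘ₗ LinearMap.inl k J k)

theorem upperRight_apply (D : Module.End k (k × J × J × k)) (l : J) :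
    upperRight D l = (D (0, l, 0, 0)).2.1 := rfl

theorem lowerLeft_apply (D : Module.End k (k × J × J × k)) (j : J) :
    lowerLeft D j = (D (0, 0, j, 0)).2.2.1 := rfl

namespace IsMDerivation

variable {T cross} {D : Module.End k (k × J × J × k)}

theorem map_one (hD : IsMDerivation T cross D) : D (1, 0, 0, 1) = 0 := by
  simpa [Mmul_one_left, Mmul_one_right] using hD.leibniz (1, 0, 0, 1) (1, 0, 0, 1)

theorem map_Ms (hD : IsMDerivation T cross D) (h2 : (2 : k) ≠ 0) : D Ms = 0 := by
  have hskew : Mbar (D Ms) = -D Ms := by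
    rw [← hD.map_Mbar, ← map_neg]
    congr 1
    simp [Mbar, Ms]
  have hsq :
      Mmul (T · ·) (cross · ·) (D Ms) Ms + Mmul (T · ·) (cross · ·) Ms (D Ms) = 0 := by
    rw [← hD.leibniz, Ms_mul_Ms, hD.map_one]
  generalize D Ms = d at hskew hsq
  obtain ⟨a, x, y, b⟩ := d
  have ha : a + a = 0 := by simpa [Mmul, Ms] using congrArg Prod.fst hsq
  simp only [Mbar, Prod.neg_mk, Prod.mk.injEq, eq_neg_iff_add_eq_zero] at hskew
  obtain ⟨hb, hx, hy, -⟩ := hskew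
  have ha := eq_zero_of_add_self_eq_zero h2 ha
  rw [ha, add_zero] at hb
  simp [ha, hb, eq_zero_of_add_self_eq_zero h2 hx, eq_zero_of_add_self_eq_zero h2 hy]

theorem map_diag (hD : IsMDerivation T cross D) (h2 : (2 : k) ≠ 0) (α β : k) :
    D (α, 0, 0, β) = 0 := by
  have hdecomp : ((α, 0, 0, β) : k × J × J × k)
      = (2⁻¹ * (α + β)) • (1, 0, 0, 1) + (2⁻¹ * (α - β)) • Ms := by
    simp only [Ms, Prod.smul_mk, Prod.mk_add_mk, smul_zero, add_zero, smul_eq_mul, Prod.mk.injEq]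
    refine ⟨?_, trivial, trivial, ?_⟩ <;> field_simp <;> ring
  rw [hdecomp, map_add, map_smul, map_smul, hD.map_one, hD.map_Ms h2, smul_zero, smul_zero,
    add_zero]

theorem map_upper_entry (hD : IsMDerivation T cross D) (h2 : (2 : k) ≠ 0) (l : J) :
    D (0, l, 0, 0) = (0, (D (0, l, 0, 0)).2.1, 0, 0) := by
  have h₁ := hD.leibniz (1, 0, 0, 0) (0, l, 0, 0)
  have h₂ := hD.leibniz (0, l, 0, 0) (0, 0, 0, 1)
  rw [hD.map_diag h2, Mmul_zero_left, zero_add] at h₁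
  rw [hD.map_diag h2, Mmul_zero_right, add_zero] at h₂
  simp only [Mmul, map_zero, LinearMap.zero_apply, mul_zero, mul_one, zero_mul, one_smul,
    zero_smul, smul_zero, add_zero, zero_add] at h₁ h₂
  generalize D (0, l, 0, 0) = d at h₁ h₂ ⊢
  obtain ⟨a, x, y, b⟩ := d
  simp only [Prod.mk.injEq] at h₁ h₂ ⊢
  exact ⟨h₂.1, trivial, h₁.2.2.1, h₁.2.2.2⟩

theorem map_lower_entry (hD : IsMDerivation T cross D) (h2 : (2 : k) ≠ 0) (j : J) :
    D (0, 0, j, 0) = (0, 0, (D (0, 0, j, 0)).2.2.1, 0) := by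
  have h₁ := hD.leibniz (0, 0, 0, 1) (0, 0, j, 0)
  have h₂ := hD.leibniz (0, 0, j, 0) (1, 0, 0, 0)
  rw [hD.map_diag h2, Mmul_zero_left, zero_add] at h₁
  rw [hD.map_diag h2, Mmul_zero_right, add_zero] at h₂
  simp only [Mmul, map_zero, LinearMap.zero_apply, mul_zero, mul_one, zero_mul, one_smul,
    zero_smul, smul_zero, add_zero, zero_add] at h₁ h₂
  generalize D (0, 0, j, 0) = d at h₁ h₂ ⊢
  obtain ⟨a, x, y, b⟩ := d
  simp only [Prod.mk.injEq] at h₁ h₂ ⊢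
  exact ⟨h₁.1, h₁.2.1, trivial, h₂.2.2.2⟩

theorem apply_eq (hD : IsMDerivation T cross D) (h2 : (2 : k) ≠ 0) (α β : k) (l j : J) :
    D (α, l, j, β) = (0, upperRight D l, lowerLeft D j, 0) := by
  have hdecomp : ((α, l, j, β) : k × J × J × k)
      = (α, 0, 0, β) + (0, l, 0, 0) + (0, 0, j, 0) := by
    simp
  rw [hdecomp, map_add, map_add, hD.map_diag h2, hD.map_upper_entry h2, hD.map_lower_entry h2,
    upperRight_apply, lowerLeft_apply]
  simp

theorem lowerLeft_cross (hD : IsMDerivation T cross D) (h2 : (2 : k) ≠ 0) (x y : J) :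
    lowerLeft D (cross x y) = cross (upperRight D x) y + cross x (upperRight D y) := by
  have h := hD.leibniz (0, x, 0, 0) (0, y, 0, 0)
  rw [hD.map_upper_entry h2 x, hD.map_upper_entry h2 y] at h
  rw [lowerLeft_apply]
  simpa [Mmul, ← upperRight_apply] using congrArg (·.2.2.1) h

theorem upperRight_cross (hD : IsMDerivation T cross D) (h2 : (2 : k) ≠ 0) (x y : J) :
    upperRight D (cross x y) = cross (lowerLeft D x) y + cross x (lowerLeft D y) := by
  have h := hD.leibniz (0, 0, x, 0) (0, 0, y, 0)
  rw [hD.map_lower_entry h2 x, hD.map_lower_entry h2 y] at h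
  rw [upperRight_apply]
  simpa [Mmul, ← lowerLeft_apply] using congrArg (·.2.1) h

theorem eq_zero_of_upperRight_eq_zero (hD : IsMDerivation T cross D) (h2 : (2 : k) ≠ 0)
    (hspan : Submodule.span k (Set.range fun x => cross x x) = ⊤) (hm : upperRight D = 0) :
    D = 0 := by
  have hn : lowerLeft D = 0 :=
    LinearMap.ext_on_range hspan fun x => by simp [hD.lowerLeft_cross h2, hm]
  refine LinearMap.ext fun ⟨α, l, j, β⟩ => ?_
  simp [hD.apply_eq h2, hm, hn]

theorem eq_zero_of_lowerLeft_eq_zero (hD : IsMDerivation T cross D) (h2 : (2 : k) ≠ 0)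
    (hspan : Submodule.span k (Set.range fun x => cross x x) = ⊤) (hn : lowerLeft D = 0) :
    D = 0 := by
  have hm : upperRight D = 0 :=
    LinearMap.ext_on_range hspan fun x => by simp [hD.upperRight_cross h2, hn]
  refine LinearMap.ext fun ⟨α, l, j, β⟩ => ?_
  simp [hD.apply_eq h2, hm, hn]

end IsMDerivation

end

theorem statement15_general
    (h2 : (2 : k) ≠ 0)
    (T : J →ₗ[k] J →ₗ[k] k)
    (cross : J →ₗ[k] J →ₗ[k] J)
    (sharp : J → J) (hcross_self : ∀ j : J, cross j j = (2 : k) • sharp j)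
    (N : J → k) (hN : ∀ j : J, N j = 0 ↔ j = 0)
    (hsharpsharp : ∀ j : J, sharp (sharp j) = N j • j)
    (D : (k × J × J × k) →ₗ[k] (k × J × J × k))
    (hleib : ∀ p q : k × J × J × k,
      D (Mmul (fun x y => T x y) (fun x y => cross x y) p q)
        = Mmul (fun x y => T x y) (fun x y => cross x y) (D p) q
          + Mmul (fun x y => T x y) (fun x y => cross x y) p (D q))
    (hbar : ∀ p : k × J × J × k, D (Mbar p) = Mbar (D p)) :
    D Ms = 0
      ∧ ∃ m n : J →ₗ[k] J,
          (∀ (α β : k) (l j : J), D (α, l, j, β) = (0, m l, n j, 0))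
          ∧ (D ≠ 0 → m ≠ 0 ∧ n ≠ 0) := by
  have hD : IsMDerivation T cross D := ⟨hleib, hbar⟩
  have hspan := span_range_cross_self_eq_top h2 hcross_self (fun j => (hN j).1) hsharpsharp
  refine ⟨hD.map_Ms h2, upperRight D, lowerLeft D, hD.apply_eq h2,
    fun hD0 => ⟨fun hm => hD0 ?_, fun hn => hD0 ?_⟩⟩
  · exact hD.eq_zero_of_upperRight_eq_zero h2 hspan hm
  · exact hD.eq_zero_of_lowerLeft_eq_zero h2 hspan hn

/-- Let `J` be a cubic Jordan division algebra (char ≠ 2,3) with norm `N`, trace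
form `T`, adjoint `♯`, and let `A = M(J,1)` be the associated 2×2 matrix
structurable algebra with involution swapping the diagonal entries and
`s = diag(1,−1)` its skew element.  Then every derivation `D` of `A` satisfies
`D(s) = 0`, and there exist linear maps `m, n` on `J` such that
`D(α, l; j, β) = (0, m(l); n(j), 0)`.  Moreover if `D ≠ 0` then `m ≠ 0` and
`n ≠ 0`. -/
theorem statement15
    (h2 : (2 : k) ≠ 0) (h3 : (3 : k) ≠ 0)
    (T : J →ₗ[k] J →ₗ[k] k) (hTsymm : ∀ x y : J, T x y = T y x)
    (cross : J →ₗ[k] J →ₗ[k] J) (hcrsymm : ∀ x y : J, cross x y = cross y x)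
    (sharp : J → J) (hcross_self : ∀ j : J, cross j j = (2 : k) • sharp j)
    (N : J → k) (hN : ∀ j : J, N j = 0 ↔ j = 0)
    (hsharpsharp : ∀ j : J, sharp (sharp j) = N j • j)
    (hTsharp : ∀ j : J, T j (sharp j) = 3 * N j)
    (hdivsharp : ∀ j : J, sharp j = 0 → j = 0)
    (D : (k × J × J × k) →ₗ[k] (k × J × J × k))
    (hleib : ∀ p q : k × J × J × k,
      D (Mmul (fun x y => T x y) (fun x y => cross x y) p q)
        = Mmul (fun x y => T x y) (fun x y => cross x y) (D p) q
          + Mmul (fun x y => T x y) (fun x y => cross x y) p (D q))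
    (hbar : ∀ p : k × J × J × k, D (Mbar p) = Mbar (D p)) :
    D Ms = 0
      ∧ ∃ m n : J →ₗ[k] J,
          (∀ (α β : k) (l j : J), D (α, l, j, β) = (0, m l, n j, 0))
          ∧ (D ≠ 0 → m ≠ 0 ∧ n ≠ 0) :=
  statement15_general h2 T cross sharp hcross_self N hN hsharpsharp D hleib hbar
end

section
/- Let J be a cubic Jordan division algebra with norm N, trace T, adjoint ♯, and A = M(J,1). For x, y ∈ J, the skewer ψ(a, b) = a b̄ − b ā of the two rank-one elements a = (N(x), x; x^♯, 1) and b = (N(y), y; y^♯, 1) of A equals N(x − y)·s, where s = diag(1, −1). In particular ψ(a,b) = 0 if and only if x = y. -/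
variable {k : Type*} [Field k] {J : Type*} [AddCommGroup J] [Module k J]

/-- Let `J` be a cubic Jordan division algebra with norm `N`, trace `T`, adjoint `♯`,
and `A = M(J,1)`.  For `x, y ∈ J`, the skewer `ψ(a,b) = a b̄ − b ā` of the rank-one
elements `a = (N(x), x; x^♯, 1)` and `b = (N(y), y; y^♯, 1)` equals `N(x−y)·s`,
where `s = diag(1,−1)`.  In particular `ψ(a,b) = 0` iff `x = y`. -/
theorem statement16
    (h2 : (2 : k) ≠ 0) (h3 : (3 : k) ≠ 0)
    (T : J →ₗ[k] J →ₗ[k] k) (hTsymm : ∀ x y : J, T x y = T y x)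
    (cross : J →ₗ[k] J →ₗ[k] J) (hcrsymm : ∀ x y : J, cross x y = cross y x)
    (sharp : J → J) (hcross_self : ∀ j : J, cross j j = (2 : k) • sharp j)
    (N : J → k) (hN : ∀ j : J, N j = 0 ↔ j = 0)
    (hsharpsharp : ∀ j : J, sharp (sharp j) = N j • j)
    (hTsharp : ∀ j : J, T j (sharp j) = 3 * N j)
    (hlin : ∀ u v : J, N u - N v + T u (sharp v) - T v (sharp u) = N (u - v))
    (x y : J) :
    (Mmul (fun a b => T a b) (fun a b => cross a b)
        ((N x, x, sharp x, (1 : k))) (Mbar (N y, y, sharp y, (1 : k)))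
      - Mmul (fun a b => T a b) (fun a b => cross a b)
        ((N y, y, sharp y, (1 : k))) (Mbar (N x, x, sharp x, (1 : k)))
      = N (x - y) • Ms)
    ∧ ((Mmul (fun a b => T a b) (fun a b => cross a b)
          ((N x, x, sharp x, (1 : k))) (Mbar (N y, y, sharp y, (1 : k)))
        - Mmul (fun a b => T a b) (fun a b => cross a b)
          ((N y, y, sharp y, (1 : k))) (Mbar (N x, x, sharp x, (1 : k)))
        = 0) ↔ x = y) := by
  have hmain : Mmul (fun a b => T a b) (fun a b => cross a b)
        ((N x, x, sharp x, (1 : k))) (Mbar (N y, y, sharp y, (1 : k)))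
      - Mmul (fun a b => T a b) (fun a b => cross a b)
        ((N y, y, sharp y, (1 : k))) (Mbar (N x, x, sharp x, (1 : k)))
      = N (x - y) • Ms := by
    have h1 := hlin x y
    simp only [Mmul, Mbar, Ms, Prod.mk_sub_mk, Prod.smul_mk, smul_eq_mul, mul_one, one_smul,
      one_mul, mul_neg, smul_zero, Prod.mk.injEq]
    refine ⟨by linear_combination h1, ?_, ?_, ?_⟩
    · rw [hcrsymm (sharp x) (sharp y)]; abel
    · rw [hcrsymm x y]; abel
    · rw [hTsymm (sharp x) y, hTsymm (sharp y) x]; linear_combination -h1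
  refine ⟨hmain, ?_⟩
  rw [hmain]
  constructor
  · intro h
    have hfst : N (x - y) = 0 := by
      have := congrArg Prod.fst h
      simpa [Ms] using this
    have := (hN (x - y)).mp hfst
    exact sub_eq_zero.mp this
  · intro h
    subst h
    rw [sub_self, (hN 0).mpr rfl, zero_smul]
end
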